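/- Let G ∈ ℝ^{M×N}, Y ∈ ℝ^{M×T}, σ² > 0, ρ ≥ 0 with ‖G[:,n]‖² + ρ > 0 for all n. Then the infimum over X ∈ ℝ^{N×T} and γ > 0 of (1/(Tσ²))‖Y − GX‖² + (1/T)∑_{n,t} X[n,t]²/γ_n + ∑_n (‖G[:,n]‖² + ρ)γ_n, after multiplying by Tσ²/2, equals the infimum over X of (1/2)‖Y − GX‖² + σ²√T·∑_n √(‖G[:,n]‖² + ρ)·‖X[n,:]‖₂. -/

import Mathlib

/-!
For fixed `X` the `γ`-part of the cost splits over the rows. With `r = ‖X[n,:]‖²` and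
`b = T (‖G[:,n]‖² + ρ)`, AM–GM gives `r / γ + b γ ≥ 2 √(b r)`, and the bound is approached as
`γ → √(r / b)` (attained when `r > 0`, only in the limit `γ → 0` when `r = 0`). Minimising out `γ`
therefore replaces the quadratic penalty by the weighted row-norm penalty, and the infimum over
`(X, γ)` becomes the infimum over `X` of the group-lasso cost.
-/

open Matrix Finset Real

lemma two_sqrt_mul_le_div_add_mul {b r γ : ℝ} (hb : 0 ≤ b) (hr : 0 ≤ r) (hγ : 0 < γ) :
    2 * √(b * r) ≤ r / γ + b * γ := by
  obtain ⟨u, hu, rfl⟩ : ∃ u, 0 ≤ u ∧ b = u ^ 2 := ⟨√b, sqrt_nonneg b, (sq_sqrt hb).symm⟩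
  obtain ⟨s, hs, rfl⟩ : ∃ s, 0 ≤ s ∧ r = s ^ 2 := ⟨√r, sqrt_nonneg r, (sq_sqrt hr).symm⟩
  rw [← mul_pow, sqrt_sq (by positivity), div_add' _ _ _ hγ.ne', le_div_iff₀ hγ]
  nlinarith [sq_nonneg (s - u * γ)]

lemma exists_div_add_mul_le {b r ε : ℝ} (hb : 0 < b) (hr : 0 ≤ r) (hε : 0 < ε) :
    ∃ γ > 0, r / γ + b * γ ≤ 2 * √(b * r) + ε := by
  obtain ⟨u, hu, rfl⟩ : ∃ u, 0 < u ∧ b = u ^ 2 :=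
    ⟨√b, sqrt_pos.2 hb, (sq_sqrt hb.le).symm⟩
  obtain ⟨s, hs, rfl⟩ : ∃ s, 0 ≤ s ∧ r = s ^ 2 := ⟨√r, sqrt_nonneg r, (sq_sqrt hr).symm⟩
  -- `γ = s / u` is the minimiser; shift it so that it stays positive when `s = 0`
  refine ⟨(s + ε / u) / u, by positivity, ?_⟩
  rw [← mul_pow, sqrt_sq (by positivity)]
  have h1 : s ^ 2 / ((s + ε / u) / u) ≤ u * s := by
    rw [div_le_iff₀ (by positivity)]
    field_simp
    nlinarith [mul_nonneg hs hε.le]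
  have h2 : u ^ 2 * ((s + ε / u) / u) = u * s + ε := by field_simp
  linarith

lemma exists_sum_div_add_mul_le {ι : Type*} [Fintype ι] {b r : ι → ℝ} (hb : ∀ i, 0 < b i)
    (hr : ∀ i, 0 ≤ r i) {ε : ℝ} (hε : 0 < ε) :
    ∃ γ : ι → ℝ, (∀ i, 0 < γ i) ∧
      ∑ i, (r i / γ i + b i * γ i) ≤ ∑ i, 2 * √(b i * r i) + ε := by
  have hε' : 0 < ε / (Fintype.card ι + 1) := by positivity
  choose γ hγ hle using fun i ↦ exists_div_add_mul_le (hb i) (hr i) hε'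
  refine ⟨γ, hγ, ?_⟩
  calc ∑ i, (r i / γ i + b i * γ i)
      ≤ ∑ i, (2 * √(b i * r i) + ε / (Fintype.card ι + 1)) := sum_le_sum fun i _ ↦ hle i
    _ ≤ ∑ i, 2 * √(b i * r i) + ε := by
      rw [sum_add_distrib, sum_const, card_univ, nsmul_eq_mul, mul_div_assoc']
      gcongr
      rw [div_le_iff₀ (by positivity)]
      linarith

lemma csInf_eq_csInf_of_forall_exists_le_add {A B : Set ℝ} (hB : B.Nonempty) (hBbdd : BddBelow B)
    (hAB : ∀ x ∈ A, ∃ y ∈ B, y ≤ x) (hBA : ∀ y ∈ B, ∀ ε > 0, ∃ x ∈ A, x ≤ y + ε) :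
    sInf A = sInf B := by
  have hA : A.Nonempty := by
    obtain ⟨y, hy⟩ := hB
    obtain ⟨x, hx, -⟩ := hBA y hy 1 one_pos
    exact ⟨x, hx⟩
  have hAbdd : BddBelow A := by
    obtain ⟨m, hm⟩ := hBbdd
    refine ⟨m, fun x hx ↦ ?_⟩
    obtain ⟨y, hy, hyx⟩ := hAB x hx
    exact (hm hy).trans hyx
  refine le_antisymm (le_csInf hB fun y hy ↦ le_of_forall_pos_le_add fun ε hε ↦ ?_)
    (le_csInf hA fun x hx ↦ ?_)
  · obtain ⟨x, hx, hxy⟩ := hBA y hy ε hε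
    exact (csInf_le hAbdd hx).trans hxy
  · obtain ⟨y, hy, hyx⟩ := hAB x hx
    exact (csInf_le hBbdd hy).trans hyx

lemma mul_sbl_cost_eq {ι κ : Type*} [Fintype ι] [Fintype κ] {T σ2 : ℝ} (hT : T ≠ 0)
    (hσ : σ2 ≠ 0) (R : ℝ) (X : Matrix ι κ ℝ) (w γ : ι → ℝ) :
    T * σ2 / 2 * (1 / (T * σ2) * R + 1 / T * (∑ n, ∑ t, X n t ^ 2 / γ n) + ∑ n, w n * γ n)
      = 1 / 2 * R + σ2 / 2 * ∑ n, ((∑ t, X n t ^ 2) / γ n + T * w n * γ n) := by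
  simp only [← sum_div, sum_add_distrib, ← mul_sum, mul_assoc]
  field_simp
  ring

lemma mul_sum_sqrt_mul_sqrt_eq {ι : Type*} [Fintype ι] {T : ℝ} (hT : 0 ≤ T) (σ2 : ℝ)
    {w : ι → ℝ} (hw : ∀ n, 0 ≤ w n) (r : ι → ℝ) :
    σ2 * √T * ∑ n, √(w n) * √(r n) = σ2 / 2 * ∑ n, 2 * √(T * w n * r n) := by
  simp only [sqrt_mul (mul_nonneg hT (hw _)), sqrt_mul hT, mul_sum]
  exact sum_congr rfl fun n _ ↦ by ring

theorem low_snr_sparse_coding_equiv_general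
    (M N T : ℕ) (hT : 0 < T)
    (G : Matrix (Fin M) (Fin N) ℝ) (Y : Matrix (Fin M) (Fin T) ℝ)
    (σ2 : ℝ) (hσ : 0 < σ2) (ρ : ℝ)
    (hG : ∀ n, 0 < (∑ m, G m n ^ 2) + ρ) :
    (T * σ2 / 2) *
      sInf {c : ℝ | ∃ (X : Matrix (Fin N) (Fin T) ℝ) (γ : Fin N → ℝ),
        (∀ n, 0 < γ n) ∧
        c = (1 / (T * σ2)) * (∑ m, ∑ t, (Y m t - (G * X) m t) ^ 2)
            + (1 / T) * (∑ n, ∑ t, X n t ^ 2 / γ n)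
            + ∑ n, ((∑ m, G m n ^ 2) + ρ) * γ n}
    = sInf {c : ℝ | ∃ X : Matrix (Fin N) (Fin T) ℝ,
        c = (1 / 2) * (∑ m, ∑ t, (Y m t - (G * X) m t) ^ 2)
            + σ2 * Real.sqrt T *
              ∑ n, Real.sqrt ((∑ m, G m n ^ 2) + ρ) * Real.sqrt (∑ t, X n t ^ 2)} := by
  have hT' : (0 : ℝ) < T := by exact_mod_cast hT
  rw [← smul_eq_mul, ← Real.sInf_smul_of_nonneg (by positivity)]
  refine csInf_eq_csInf_of_forall_exists_le_add ⟨_, 0, rfl⟩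
    ⟨0, by rintro _ ⟨X, rfl⟩; positivity⟩ ?_ ?_
  · rintro _ ⟨_, ⟨X, γ, hγ, rfl⟩, rfl⟩
    refine ⟨_, ⟨X, rfl⟩, ?_⟩
    dsimp only [smul_eq_mul]
    rw [mul_sbl_cost_eq hT'.ne' hσ.ne', mul_sum_sqrt_mul_sqrt_eq hT'.le _ fun n ↦ (hG n).le]
    gcongr with n
    exact two_sqrt_mul_le_div_add_mul (mul_pos hT' (hG n)).le (by positivity) (hγ n)
  · rintro _ ⟨X, rfl⟩ ε hε
    obtain ⟨γ, hγ, hle⟩ := exists_sum_div_add_mul_le (fun n ↦ mul_pos hT' (hG n))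
      (fun n ↦ by positivity : ∀ n, 0 ≤ ∑ t, X n t ^ 2) (div_pos hε (half_pos hσ))
    refine ⟨_, ⟨_, ⟨X, γ, hγ, rfl⟩, rfl⟩, ?_⟩
    dsimp only [smul_eq_mul]
    rw [mul_sbl_cost_eq hT'.ne' hσ.ne', mul_sum_sqrt_mul_sqrt_eq hT'.le _ fun n ↦ (hG n).le]
    have h := mul_le_mul_of_nonneg_left hle (half_pos hσ).le
    rw [mul_add, mul_div_cancel₀ _ (half_pos hσ).ne'] at h
    linarith

theorem low_snr_sparse_coding_equiv
    (M N T : ℕ) (hT : 0 < T)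
    (G : Matrix (Fin M) (Fin N) ℝ) (Y : Matrix (Fin M) (Fin T) ℝ)
    (σ2 : ℝ) (hσ : 0 < σ2) (ρ : ℝ) (hρ : 0 ≤ ρ)
    (hG : ∀ n, 0 < (∑ m, G m n ^ 2) + ρ) :
    (T * σ2 / 2) *
      sInf {c : ℝ | ∃ (X : Matrix (Fin N) (Fin T) ℝ) (γ : Fin N → ℝ),
        (∀ n, 0 < γ n) ∧
        c = (1 / (T * σ2)) * (∑ m, ∑ t, (Y m t - (G * X) m t) ^ 2)
            + (1 / T) * (∑ n, ∑ t, X n t ^ 2 / γ n)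
            + ∑ n, ((∑ m, G m n ^ 2) + ρ) * γ n}
    = sInf {c : ℝ | ∃ X : Matrix (Fin N) (Fin T) ℝ,
        c = (1 / 2) * (∑ m, ∑ t, (Y m t - (G * X) m t) ^ 2)
            + σ2 * Real.sqrt T *
              ∑ n, Real.sqrt ((∑ m, G m n ^ 2) + ρ) * Real.sqrt (∑ t, X n t ^ 2)} :=
  low_snr_sparse_coding_equiv_general M N T hT G Y σ2 hσ ρ hG
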